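/- arXiv:2211.05068 — 2 statements merged into one kernel-verified Lean document; each statement's English description precedes it below -/
import Mathlib

section
/- Let m be even, let α be a self-dual basis of F_{q^m} over F_q, let k = m/2, and let 0 ≤ e ≤ m−1. Then the Gabidulin code G_k(α) is e-Galois self-dual (i.e., G_k(α) = G_k(α)^{⊥_e}) if and only if e = m/2. -/
/-!
Write `q = #K` and `v_s = α^{q^s}`. The trace formula `Tr(x) = ∑_{s<m} x^{q^s}` turns the
trace-orthonormality of `α` into `Mᵀ M = 1` for the Moore matrix `M` with rows `v_0, …, v_{m-1}`;
hence `M Mᵀ = 1` as well, i.e. `∑ i, v_s i * v_u i = [s ≡ u mod m]`. As `v_u^{q^e} = v_{u+e}`, the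
generator `v_t` of `G_k` is `e`-orthogonal to `v_b` unless `t ≡ b + e`, and for `m = 2k` the
residues `{0, …, k-1}` and `{e, …, e+k-1}` are disjoint exactly when `e = k`. For `e = k` the
reverse inclusion follows by expanding a vector of the dual in the orthonormal basis `(v_s)`.
-/

/-- The Gabidulin code `G_k(α)`: the `F`-span of the vectors `α^{q^i}`, `i = 0, …, k-1`. -/
noncomputable def gab {F : Type*} [Field F] (q : ℕ) {m : ℕ} (k : ℕ) (α : Fin m → F) :
    Submodule F (Fin m → F) :=
  Submodule.span F (Set.range fun i : Fin k => fun j : Fin m => α j ^ q ^ (i : ℕ))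

/-- The `e`-Galois dual of a linear code `C ⊆ F^n`,
    with respect to the inner product `x ·_e y = ∑ i, x i * (y i)^(q^e)`. -/
def galoisDual {F : Type*} [Field F] (q e : ℕ) {n : ℕ} (C : Submodule F (Fin n → F)) :
    Submodule F (Fin n → F) where
  carrier := {x | ∀ c ∈ C, ∑ i, x i * c i ^ q ^ e = 0}
  add_mem' := by
    intro a b ha hb c hc
    simp only [Set.mem_setOf_eq] at *
    simp [Pi.add_apply, add_mul, Finset.sum_add_distrib, ha c hc, hb c hc]
  zero_mem' := by
    intro c hc
    simp
  smul_mem' := by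
    intro r a ha c hc
    simp only [Set.mem_setOf_eq] at *
    simp [Pi.smul_apply, smul_eq_mul, mul_assoc, ← Finset.mul_sum, ha c hc]

open Module Submodule FiniteField

section GaloisDual

variable {F : Type*} [Field F]

def semilinearDotProduct {ι : Type*} [Fintype ι] (σ : F →+* F) (x : ι → F) :
    (ι → F) →ₛₗ[σ] F where
  toFun c := ∑ i, x i * σ (c i)
  map_add' c d := by simp only [Pi.add_apply, map_add, mul_add, Finset.sum_add_distrib]
  map_smul' t c := by
    simp only [Pi.smul_apply, smul_eq_mul, map_mul, Finset.mul_sum, mul_left_comm]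

theorem mem_galoisDual_span_iff (K : Type*) [Field K] [Fintype K] [Algebra K F] (e : ℕ) {n : ℕ}
    {ι : Type*} (v : ι → Fin n → F) (x : Fin n → F) :
    x ∈ galoisDual (Fintype.card K) e (span F (Set.range v)) ↔
      ∀ j, ∑ i, x i * v j i ^ Fintype.card K ^ e = 0 := by
  -- `y ↦ y ^ q ^ e` is the `e`-th power of the Frobenius of `F` over `K`, hence additive.
  let f := semilinearDotProduct (frobeniusAlgHom K F ^ e).toRingHom x
  have hf : ∀ c, f c = ∑ i, x i * c i ^ Fintype.card K ^ e := fun c => by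
    show ∑ i, x i * (frobeniusAlgHom K F ^ e) (c i) = _
    simp only [AlgHom.coe_pow, coe_frobeniusAlgHom, pow_iterate]
  change (∀ c ∈ span F (Set.range v), _) ↔ _
  simp_rw [← hf, ← LinearMap.mem_ker, ← SetLike.le_def, span_le, Set.range_subset_iff]
  rfl

end GaloisDual

def mooreRow {R : Type*} [Monoid R] (q : ℕ) {m : ℕ} (α : Fin m → R) (s : ℕ) : Fin m → R :=
  fun j => α j ^ q ^ s

theorem gab_eq_span_mooreRow {F : Type*} [Field F] (q : ℕ) {m : ℕ} (k : ℕ) (α : Fin m → F) :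
    gab q k α = span F (Set.range fun s : Fin k => mooreRow q α s) :=
  rfl

theorem mooreRow_pow_pow {R : Type*} [CommMonoid R] (q : ℕ) {m : ℕ} (α : Fin m → R) (s e : ℕ)
    (j : Fin m) : mooreRow q α s j ^ q ^ e = mooreRow q α (s + e) j := by
  simp only [mooreRow, ← pow_mul, ← pow_add]

theorem forall_mod_ne_add_mod_iff {k e : ℕ} (he : e ≤ 2 * k - 1) :
    (∀ t < k, ∀ b < k, t % (2 * k) ≠ (b + e) % (2 * k)) ↔ e = k := by
  constructor
  · intro h
    by_contra hne
    rcases lt_or_gt_of_ne hne with hlt | hgt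
    · exact h e hlt 0 (by omega) (by rw [zero_add])
    · refine h 0 (by omega) (2 * k - e) (by omega) ?_
      rw [Nat.sub_add_cancel (by omega), Nat.mod_self, Nat.zero_mod]
  · rintro rfl t ht b hb
    rw [Nat.mod_eq_of_lt (by omega), Nat.mod_eq_of_lt (by omega)]
    omega

section FiniteField

open Matrix

variable {K F : Type*} [Field K] [Fintype K] [Field F] [Finite F] [Algebra K F]

theorem mooreRow_mod_finrank {m : ℕ} (α : Fin m → F) (s : ℕ) :
    mooreRow (Fintype.card K) α (s % finrank K F) = mooreRow (Fintype.card K) α s := by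
  have : Fintype F := Fintype.ofFinite F
  funext j
  conv_rhs => rw [mooreRow, ← Nat.mod_add_div s (finrank K F), pow_add, pow_mul (Fintype.card K),
    ← card_eq_pow_finrank, pow_mul, pow_card_pow]
  rfl

theorem mooreMatrix_transpose_mul_self {m : ℕ} {α : Fin m → F} (hm : finrank K F = m)
    (hα : ∀ i j, Algebra.trace K F (α i * α j) = if i = j then 1 else 0) :
    (of fun s : Fin m => mooreRow (Fintype.card K) α s)ᵀ *
      of (fun s : Fin m => mooreRow (Fintype.card K) α s) = 1 := by
  ext i j
  subst hm
  rw [mul_apply, one_apply, ← MonoidWithZeroHom.map_ite_one_zero (algebraMap K F), ← hα,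
    algebraMap_trace_eq_sum_pow, Finset.sum_range, Nat.card_eq_fintype_card]
  simp [mooreRow, mul_pow]

theorem sum_mooreRow_mul_mooreRow {m : ℕ} {α : Fin m → F} (hm : finrank K F = m)
    (hα : ∀ i j, Algebra.trace K F (α i * α j) = if i = j then 1 else 0) (s u : ℕ) :
    ∑ i, mooreRow (Fintype.card K) α s i * mooreRow (Fintype.card K) α u i =
      if s % m = u % m then 1 else 0 := by
  have hm0 : 0 < m := hm ▸ finrank_pos
  have hMMt := mul_eq_one_comm.mp (mooreMatrix_transpose_mul_self hm hα)
  have h := congr_fun₂ hMMt ⟨s % m, Nat.mod_lt s hm0⟩ ⟨u % m, Nat.mod_lt u hm0⟩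
  rw [mul_apply, one_apply] at h
  simpa only [of_apply, transpose_apply, Fin.mk.injEq, ← hm, mooreRow_mod_finrank] using h

theorem sum_dotProduct_mooreRow_smul {m : ℕ} {α : Fin m → F} (hm : finrank K F = m)
    (hα : ∀ i j, Algebra.trace K F (α i * α j) = if i = j then 1 else 0) (x : Fin m → F) :
    ∑ s : Fin m, (x ⬝ᵥ mooreRow (Fintype.card K) α s) • mooreRow (Fintype.card K) α s = x := by
  set M := of fun s : Fin m => mooreRow (Fintype.card K) α s
  have h : vecMul (vecMul x Mᵀ) M = x := by
    rw [vecMul_vecMul, mooreMatrix_transpose_mul_self hm hα, vecMul_one]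
  funext j
  simpa [M, vecMul, dotProduct, Finset.sum_apply] using congrFun h j

theorem gab_le_galoisDual_iff {m : ℕ} {α : Fin m → F} (hm : finrank K F = m)
    (hα : ∀ i j, Algebra.trace K F (α i * α j) = if i = j then 1 else 0) (k e : ℕ) :
    gab (Fintype.card K) k α ≤ galoisDual (Fintype.card K) e (gab (Fintype.card K) k α) ↔
      ∀ t < k, ∀ b < k, t % m ≠ (b + e) % m := by
  rw [gab_eq_span_mooreRow, span_le, Set.range_subset_iff]
  simp only [SetLike.mem_coe, mem_galoisDual_span_iff, mooreRow_pow_pow,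
    sum_mooreRow_mul_mooreRow hm hα]
  simp [Fin.forall_iff]

theorem galoisDual_half_le_gab {k : ℕ} {α : Fin (2 * k) → F} (hm : finrank K F = 2 * k)
    (hα : ∀ i j, Algebra.trace K F (α i * α j) = if i = j then 1 else 0) :
    galoisDual (Fintype.card K) k (gab (Fintype.card K) k α) ≤ gab (Fintype.card K) k α := by
  intro x hx
  rw [gab_eq_span_mooreRow, mem_galoisDual_span_iff] at hx
  rw [← sum_dotProduct_mooreRow_smul hm hα x]
  refine sum_mem fun s _ => ?_
  by_cases hs : (s : ℕ) < k
  · exact smul_mem _ _ (subset_span ⟨⟨s, hs⟩, rfl⟩)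
  · have hxs := hx ⟨s - k, by omega⟩
    simp only [mooreRow_pow_pow, Nat.sub_add_cancel (not_lt.mp hs)] at hxs
    rw [dotProduct, hxs, zero_smul]
    exact zero_mem _

end FiniteField

theorem gab_selfDual_iff_general
    (q m : ℕ) (hmeven : 2 ∣ m)
    (K F : Type) [Field K] [Field F] [Algebra K F] [Fintype K] [Fintype F]
    (hK : Fintype.card K = q)
    (α : Fin m → F) (hα : ∃ b : Module.Basis (Fin m) K F, ⇑b = α)
    (hsd : ∀ i j, Algebra.trace K F (α i * α j) = if i = j then 1 else 0)
    (e : ℕ) (he : e ≤ m - 1) :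
    gab q (m / 2) α = galoisDual q e (gab q (m / 2) α) ↔ e = m / 2 := by
  obtain ⟨b, rfl⟩ := hα
  subst hK
  have hm : finrank K F = m := (finrank_eq_card_basis b).trans (Fintype.card_fin m)
  obtain ⟨k, rfl⟩ := hmeven
  rw [Nat.mul_div_cancel_left k two_pos]
  constructor
  · intro h
    exact (forall_mod_ne_add_mod_iff he).mp ((gab_le_galoisDual_iff hm hsd k e).mp h.le)
  · rintro rfl
    have hle := (gab_le_galoisDual_iff hm hsd e e).mpr ((forall_mod_ne_add_mod_iff he).mpr rfl)
    exact le_antisymm hle (galoisDual_half_le_gab hm hsd)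

/-- For even `m` and a self-dual basis `α`, the Gabidulin code `G_{m/2}(α)` is
`e`-Galois self-dual if and only if `e = m / 2`. -/
theorem gab_selfDual_iff
    (q m : ℕ) (hq : IsPrimePow q) (hm : 0 < m) (hmeven : 2 ∣ m)
    (K F : Type) [Field K] [Field F] [Algebra K F] [Fintype K] [Fintype F]
    (hK : Fintype.card K = q) (hF : Fintype.card F = q ^ m)
    (α : Fin m → F) (hα : ∃ b : Module.Basis (Fin m) K F, ⇑b = α)
    (hsd : ∀ i j, Algebra.trace K F (α i * α j) = if i = j then 1 else 0)
    (e : ℕ) (he : e ≤ m - 1) :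
    gab q (m / 2) α = galoisDual q e (gab q (m / 2) α) ↔ e = m / 2 :=
  gab_selfDual_iff_general q m hmeven K F hK α hα hsd e he
end

section
/- Let q be an even prime power and let m be an even positive integer. Then there exists a basis α of F_{q^m} over F_q such that the Gabidulin code G_{m/2}(α) is (m/2)-Galois self-dual, i.e., G_{m/2}(α) = G_{m/2}(α)^{⊥_{m/2}}. -/
namespace LinearMap.BilinForm

open Module Submodule

variable {K V : Type*} [Field K] [AddCommGroup V] [Module K V] {B : LinearMap.BilinForm K V}

theorem mem_orthogonal_span_singleton_iff {x y : V} : y ∈ B.orthogonal (K ∙ x) ↔ B x y = 0 := by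
  rw [orthogonal_span_singleton_eq_toLin_ker]; rfl

theorem IsSymm.apply_add_add_of_charTwo [CharP K 2] (hB : B.IsSymm) (x y : V) :
    B (x + y) (x + y) = B x x + B y y := by
  rw [add_left, add_right, add_right, ← hB.eq y x, add_assoc, ← add_assoc (B y x),
    CharTwo.add_self_eq_zero, zero_add]

theorem exists_apply_self_eq_one [CharP K 2] [PerfectRing K 2] {x : V} (hx : B x x ≠ 0) :
    ∃ v, B v v = 1 := by
  obtain ⟨d, hd⟩ := surjective_frobenius K 2 (B x x)
  have hd0 : d ≠ 0 := by rintro rfl; exact hx (by simp [← hd])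
  refine ⟨d⁻¹ • x, ?_⟩
  rw [smul_left, smul_right, ← hd, _root_.frobenius_def]
  field_simp

theorem exists_apply_self_eq_one_and_orthogonal [CharP K 2] [PerfectRing K 2] (hB : B.IsSymm)
    (hnd : B.Nondegenerate) {x : V} (hx : B x x ≠ 0) :
    ∃ v, B v v = 1 ∧ (B.orthogonal (K ∙ v) = ⊥ ∨ ∃ y ∈ B.orthogonal (K ∙ v), B y y ≠ 0) := by
  obtain ⟨v, hv⟩ := exists_apply_self_eq_one hx
  by_cases hnalt : ∃ y ∈ B.orthogonal (K ∙ v), B y y ≠ 0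
  · exact ⟨v, hv, .inr hnalt⟩
  rcases eq_or_ne (B.orthogonal (K ∙ v)) ⊥ with hbot | hne
  · exact ⟨v, hv, .inl hbot⟩
  push Not at hnalt
  simp only [mem_orthogonal_span_singleton_iff] at hnalt
  obtain ⟨w, hw, hw0⟩ := (Submodule.ne_bot_iff _).1 hne
  rw [mem_orthogonal_span_singleton_iff] at hw
  obtain ⟨z, hz⟩ : ∃ z, B w z ≠ 0 := by
    by_contra! h
    exact hw0 (hnd.1 w h)
  -- `u` is the projection of `z` to the orthogonal of `v`, normalised so that `B w u = 1`
  set u := (B w z)⁻¹ • (z - B v z • v)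
  have hvu : B v u = 0 := by simp [u, hv]
  have hwv : B w v = 0 := by rw [hB.eq]; exact hw
  have hwu : B w u = 1 := by simp [u, hwv, hz]
  have hu : B u u = 0 := hnalt u hvu
  have hvw : B (v + w) (v + w) = 1 := by
    rw [hB.apply_add_add_of_charTwo, hv, hnalt w hw, add_zero]
  refine ⟨v + w, hvw, .inr ⟨v + w + u, ?_, ?_⟩⟩
  · rw [mem_orthogonal_span_singleton_iff, add_right, hvw, add_left, hvu, hwu, zero_add,
      CharTwo.add_self_eq_zero]
  · rw [hB.apply_add_add_of_charTwo, hvw, hu, add_zero]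
    exact one_ne_zero

theorem exists_basis_toMatrix_eq_one_of_orthogonal_span_singleton (hB : B.IsSymm) {v : V}
    (hv : B v v = 1) {d : ℕ} (b : Basis (Fin d) K (B.orthogonal (K ∙ v)))
    (hb : (B.restrict (B.orthogonal (K ∙ v))).toMatrix b = 1) :
    ∃ b' : Basis (Fin (d + 1)) K V, B.toMatrix b' = 1 := by
  have hv0 : B v v ≠ 0 := hv ▸ one_ne_zero
  have hli : ∀ (c : K), ∀ w ∈ B.orthogonal (K ∙ v), c • v + w = 0 → c = 0 := by
    intro c w hw hcw
    have hcv : c • v ∈ B.orthogonal (K ∙ v) := by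
      rw [eq_neg_of_add_eq_zero_left hcw]; exact neg_mem hw
    have := Submodule.disjoint_def.1 (isCompl_span_singleton_orthogonal hv0).disjoint _
      (Submodule.smul_mem _ c (mem_span_singleton_self v)) hcv
    exact (smul_eq_zero.1 this).resolve_right (ne_zero_of_map hv0)
  have hsp : ∀ z : V, ∃ c : K, z + c • v ∈ B.orthogonal (K ∙ v) := fun z =>
    ⟨-B v z, by rw [mem_orthogonal_span_singleton_iff, add_right, smul_right, hv]; ring⟩
  refine ⟨Basis.mkFinCons v b hli hsp, ?_⟩
  ext i j
  have hbW (i : Fin d) : B v (b i) = 0 := mem_orthogonal_span_singleton_iff.1 (b i).2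
  rw [toMatrix_apply, Basis.coe_mkFinCons]
  induction i using Fin.cases <;> induction j using Fin.cases <;>
    simp only [Fin.cons_zero, Fin.cons_succ, Function.comp_apply, Matrix.one_apply,
      Fin.succ_inj, Fin.succ_ne_zero, (Fin.succ_ne_zero _).symm]
  · simpa using hv
  · simp [hbW]
  · simp [hB.eq, hbW]
  · simpa [toMatrix_apply, Matrix.one_apply] using congr($hb _ _)

theorem exists_basis_toMatrix_eq_one_of_charTwo [CharP K 2] [PerfectRing K 2]
    [FiniteDimensional K V] (hB : B.IsSymm) (hnd : B.Nondegenerate) (hx : ∃ x, B x x ≠ 0) :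
    ∃ b : Basis (Fin (finrank K V)) K V, B.toMatrix b = 1 := by
  suffices ∀ d, finrank K V = d → ∃ b : Basis (Fin d) K V, B.toMatrix b = 1 from this _ rfl
  intro d hd
  induction d generalizing V with
  | zero => exact ⟨basisOfFinrankZero hd, Subsingleton.elim _ _⟩
  | succ d ih =>
  obtain ⟨x, hx⟩ := hx
  obtain ⟨v, hv, hW⟩ := exists_apply_self_eq_one_and_orthogonal hB hnd hx
  have hv0 : B v v ≠ 0 := hv ▸ one_ne_zero
  have hcompl := isCompl_span_singleton_orthogonal hv0
  set W := B.orthogonal (K ∙ v)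
  have hWd : finrank K W = d := by
    have := Submodule.finrank_add_eq_of_isCompl hcompl
    rw [finrank_span_singleton (ne_zero_of_map hv0)] at this
    omega
  obtain ⟨b, hb⟩ : ∃ b : Basis (Fin d) K W, (B.restrict W).toMatrix b = 1 := by
    rcases hW with hbot | ⟨y, hy, hyy⟩
    · obtain rfl : d = 0 := by rw [← hWd, hbot, finrank_bot]
      exact ⟨basisOfFinrankZero hWd, Subsingleton.elim _ _⟩
    · exact ih (hB.restrict W)
        (restrict_nondegenerate_orthogonal_spanSingleton B hnd hB.isRefl hv0) ⟨⟨y, hy⟩, hyy⟩ hWd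
  exact exists_basis_toMatrix_eq_one_of_orthogonal_span_singleton hB hv b hb

end LinearMap.BilinForm

open Module Matrix

def mooreMatrix {R ι : Type*} [Monoid R] (q n : ℕ) (α : ι → R) : Matrix (Fin n) ι R :=
  Matrix.of fun i j => α j ^ q ^ (i : ℕ)

namespace FiniteField

variable {K L : Type*} [Field K] [Field L] [Finite L] [Algebra K L]

theorem mooreMatrix_transpose_mul_self [Fintype K] {ι : Type*} [Fintype ι] (α : ι → L) :
    (mooreMatrix (Fintype.card K) (finrank K L) α)ᵀ *
        mooreMatrix (Fintype.card K) (finrank K L) α =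
      (Algebra.traceMatrix K α).map (algebraMap K L) := by
  ext i j
  simp only [mooreMatrix, mul_apply, transpose_apply, of_apply, map_apply,
    Algebra.traceMatrix_apply, Algebra.traceForm_apply, algebraMap_trace_eq_sum_pow,
    Nat.card_eq_fintype_card, mul_pow]
  exact Fin.sum_univ_eq_sum_range (fun k => α i ^ Fintype.card K ^ k * α j ^ Fintype.card K ^ k) _

variable (K L) in
theorem exists_traceForm_self_ne_zero [CharP K 2] : ∃ x : L, Algebra.traceForm K L x x ≠ 0 := by
  have := Finite.of_injective _ (algebraMap K L).injective
  have : CharP L 2 := charP_of_injective_algebraMap (algebraMap K L).injective 2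
  obtain ⟨z, hz⟩ : ∃ z, Algebra.traceForm K L 1 z ≠ 0 := by
    by_contra! h
    exact one_ne_zero ((traceForm_nondegenerate K L).1 1 h)
  obtain ⟨x, rfl⟩ := surjective_frobenius L 2 z
  exact ⟨x, by simpa [sq, frobenius_def] using hz⟩

variable (K L) in
theorem exists_basis_traceMatrix_eq_one [CharP K 2] :
    ∃ b : Basis (Fin (finrank K L)) K L, Algebra.traceMatrix K b = 1 := by
  have := Finite.of_injective _ (algebraMap K L).injective
  simpa only [Algebra.traceMatrix_of_basis] using
    LinearMap.BilinForm.exists_basis_toMatrix_eq_one_of_charTwo (Algebra.traceForm_isSymm K)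
      (traceForm_nondegenerate K L) (exists_traceForm_self_ne_zero K L)

end FiniteField

theorem galoisDual_le_gab {F : Type*} [Field F] {q m e : ℕ} {α : Fin m → F} (hm : m ≤ e + e)
    (hM : (mooreMatrix q m α)ᵀ * mooreMatrix q m α = 1) :
    galoisDual q e (gab q e α) ≤ gab q e α := by
  intro x hx
  set M := mooreMatrix q m α
  -- for `i ≥ e`, `(M *ᵥ x) i` is the `e`-Galois pairing of `x` with the generator `α^{q^(i-e)}`
  have hcoord (i : Fin m) (hi : e ≤ i) : (M *ᵥ x) i = 0 := by
    have := hx _ (Submodule.subset_span ⟨⟨i - e, by omega⟩, rfl⟩)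
    simp only [← pow_mul, ← pow_add, Nat.sub_add_cancel hi] at this
    simpa [M, mooreMatrix, mulVec, dotProduct, mul_comm] using this
  have hx : x = ∑ i, (M *ᵥ x) i • M i := by
    rw [← vecMul_eq_sum, ← mulVec_transpose, mulVec_mulVec, hM, one_mulVec]
  rw [hx]
  refine Submodule.sum_mem _ fun i _ => ?_
  by_cases hi : (i : ℕ) < e
  · exact Submodule.smul_mem _ _ (Submodule.subset_span ⟨⟨i, hi⟩, rfl⟩)
  · rw [hcoord i (not_lt.1 hi), zero_smul]
    exact Submodule.zero_mem _

section Gabidulin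

variable (K : Type*) {F : Type*} [Field K] [Fintype K] [Field F] [Algebra K F]

local notation "q" => Fintype.card K

theorem FiniteField.add_pow_card_pow (e : ℕ) (a b : F) :
    (a + b) ^ q ^ e = a ^ q ^ e + b ^ q ^ e := by
  have := map_add (FiniteField.frobeniusAlgHom K F ^ e) a b
  rwa [AlgHom.coe_pow, FiniteField.coe_frobeniusAlgHom, pow_iterate] at this

theorem mem_galoisDual_span_iff_s10 {n : ℕ} (e : ℕ) {S : Set (Fin n → F)} {x : Fin n → F} :
    x ∈ galoisDual q e (Submodule.span F S) ↔ ∀ c ∈ S, ∑ i, x i * c i ^ q ^ e = 0 := by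
  refine ⟨fun h c hc => h c (Submodule.subset_span hc), fun h c hc => ?_⟩
  induction hc using Submodule.span_induction with
  | mem c hc => exact h c hc
  | zero => simp [zero_pow (pow_ne_zero e Fintype.card_ne_zero)]
  | add c d _ _ hc hd =>
    simp only [Pi.add_apply, FiniteField.add_pow_card_pow, mul_add, Finset.sum_add_distrib, hc, hd,
      add_zero]
  | smul a c _ hc =>
    simp only [Pi.smul_apply, smul_eq_mul, mul_pow, mul_left_comm (x _), ← Finset.mul_sum, hc,
      mul_zero]

variable {K} {m e : ℕ} {α : Fin m → F}

theorem gab_le_galoisDual (hm : e + e ≤ m) (hM : mooreMatrix q m α * (mooreMatrix q m α)ᵀ = 1) :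
    gab q e α ≤ galoisDual q e (gab q e α) := by
  refine Submodule.span_le.2 ?_
  rintro _ ⟨i, rfl⟩
  rw [SetLike.mem_coe, gab, mem_galoisDual_span_iff_s10]
  rintro _ ⟨j, rfl⟩
  have hij : (⟨i, by omega⟩ : Fin m) ≠ ⟨j + e, by omega⟩ := by
    simp only [ne_eq, Fin.mk.injEq]; omega
  simpa [mooreMatrix, mul_apply, one_apply, hij, ← pow_mul, ← pow_add] using
    congr_fun₂ hM ⟨i, by omega⟩ ⟨j + e, by omega⟩

theorem gab_eq_galoisDual_of_transpose_mul_eq_one (hm : m = e + e)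
    (hM : (mooreMatrix q m α)ᵀ * mooreMatrix q m α = 1) :
    gab q e α = galoisDual q e (gab q e α) :=
  le_antisymm (gab_le_galoisDual hm.ge (mul_eq_one_comm.1 hM)) (galoisDual_le_gab hm.le hM)

end Gabidulin

theorem exists_galois_selfDual_gab_general
    (q m : ℕ) (hqeven : Even q) (hmeven : 2 ∣ m)
    (K F : Type) [Field K] [Field F] [Algebra K F] [Fintype K] [Fintype F]
    (hK : Fintype.card K = q) (hF : Fintype.card F = q ^ m) :
    ∃ α : Fin m → F, (∃ b : Module.Basis (Fin m) K F, ⇑b = α) ∧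
      gab q (m / 2) α = galoisDual q (m / 2) (gab q (m / 2) α) := by
  subst hK
  have : CharP K 2 :=
    ringChar.of_eq (FiniteField.even_card_iff_char_two.2 (Nat.even_iff.1 hqeven))
  obtain rfl : finrank K F = m :=
    Nat.pow_right_injective Fintype.one_lt_card
      (hF ▸ card_eq_pow_finrank (K := K) (V := F)).symm
  obtain ⟨b, hb⟩ := FiniteField.exists_basis_traceMatrix_eq_one K F
  refine ⟨b, ⟨b, rfl⟩, gab_eq_galoisDual_of_transpose_mul_eq_one (by omega) ?_⟩
  rw [FiniteField.mooreMatrix_transpose_mul_self, hb, Matrix.map_one _ (map_zero _) (map_one _)]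

/-- For even `q` and even `m`, there exists a basis `α` of `F_{q^m}` over `F_q` such that
the Gabidulin code `G_{m/2}(α)` is `(m/2)`-Galois self-dual. -/
theorem exists_galois_selfDual_gab
    (q m : ℕ) (hq : IsPrimePow q) (hqeven : Even q) (hm : 0 < m) (hmeven : 2 ∣ m)
    (K F : Type) [Field K] [Field F] [Algebra K F] [Fintype K] [Fintype F]
    (hK : Fintype.card K = q) (hF : Fintype.card F = q ^ m) :
    ∃ α : Fin m → F, (∃ b : Module.Basis (Fin m) K F, ⇑b = α) ∧
      gab q (m / 2) α = galoisDual q (m / 2) (gab q (m / 2) α) :=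
  exists_galois_selfDual_gab_general q m hqeven hmeven K F hK hF
end
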